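/- Let b > 0 and m > 0 be real and let l be a nonzero integer. If ψ : (0,∞) → ℂ is twice continuously differentiable on (0,∞), square integrable with respect to Lebesgue measure on (0,∞), and satisfies the deficiency equation −(1/(2m))[ψ''(r) + (1/4 − l²)·ψ(r)/r² − (b²r²/4)·ψ(r)] = −i·ψ(r) for all r ∈ (0,∞), then ψ is identically zero. -/

import Mathlib

/-!
Write the equation as `ψ'' = (V + 2mi) ψ` with `V r = (l² - 1/4)/r² + b²r²/4`. The flux
`K = r²⟪ψ, ψ'⟫ - r‖ψ‖²/2 = (r³/2) (‖ψ‖²/r)'` satisfies `K' ≥ (r²V - 3/4) ‖ψ‖²` by Cauchy–Schwarz,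
and `r²V > 3/4` because `l ≠ 0`. So `K` is nondecreasing, and for each `r₀` the function
`‖ψ‖²/r + K(r₀)/r²` attains its minimum at `r₀`. If `K(r₀) > 0` this makes `‖ψ‖²` grow linearly
at infinity, and if `K(r₀) < 0` it makes `‖ψ‖²` blow up like `1/r` at the origin; either way `ψ`
is not square integrable. Hence `K ≡ 0`, so `K' ≡ 0`, which forces `ψ ≡ 0`.
-/

open MeasureTheory Set Filter Topology

lemma not_integrableOn_Ioi_of_eventually_ge {g : ℝ → ℝ} {a c : ℝ} (hc : 0 < c)
    (hg : ∀ᶠ x in atTop, c ≤ g x) : ¬ IntegrableOn g (Ioi a) := by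
  intro hint
  obtain ⟨R, hR⟩ := eventually_atTop.1 hg
  have hconst : IntegrableOn (fun _ ↦ c) (Ioi (max a R)) := by
    refine (hint.mono_set (Ioi_subset_Ioi (le_max_left a R))).mono' aestronglyMeasurable_const ?_
    refine (ae_restrict_iff' measurableSet_Ioi).2 (ae_of_all _ fun x hx ↦ ?_)
    rw [Real.norm_of_nonneg hc.le]
    exact hR x (le_max_right a R |>.trans hx.le)
  simp [integrableOn_const_iff, hc.ne', Real.volume_Ioi] at hconst

lemma not_integrableOn_Ioi_zero_of_eventually_div_le {g : ℝ → ℝ} {c : ℝ} (hc : 0 < c)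
    (hg : ∀ᶠ x in 𝓝[>] 0, c / x ≤ g x) : ¬ IntegrableOn g (Ioi 0) := by
  intro hint
  obtain ⟨T, hT, hTg⟩ := mem_nhdsGT_iff_exists_Ioo_subset.1 hg
  have hdiv : IntegrableOn (fun x ↦ c / x) (Ioo 0 T) := by
    refine (hint.mono_set Ioo_subset_Ioi_self).mono'
      (measurable_const.div measurable_id).aestronglyMeasurable ?_
    refine (ae_restrict_iff' measurableSet_Ioo).2 (ae_of_all _ fun x hx ↦ ?_)
    rw [Real.norm_of_nonneg (div_nonneg hc.le hx.1.le)]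
    exact hTg hx
  have hinv : IntervalIntegrable (·⁻¹) volume 0 T := by
    rw [intervalIntegrable_iff_integrableOn_Ioc_of_le (le_of_lt hT),
      integrableOn_Ioc_iff_integrableOn_Ioo]
    refine IntegrableOn.congr_fun (hdiv.const_mul c⁻¹) (fun x _ ↦ ?_) measurableSet_Ioo
    field_simp
  simp [intervalIntegrable_inv_iff, (mem_Ioi.1 hT).ne] at hinv

lemma isMinOn_Ioi_of_hasDerivAt {f f' : ℝ → ℝ} {a x₀ : ℝ} (hx₀ : a < x₀)
    (hf : ∀ x ∈ Ioi a, HasDerivAt f (f' x) x)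
    (hleft : ∀ x ∈ Ioo a x₀, f' x ≤ 0) (hright : ∀ x ∈ Ioi x₀, 0 ≤ f' x) :
    IsMinOn f (Ioi a) x₀ := by
  have hcont : ContinuousOn f (Ioi a) := fun x hx ↦ (hf x hx).continuousAt.continuousWithinAt
  intro x hx
  rcases le_total x x₀ with hx_le | hx_ge
  · refine antitoneOn_of_hasDerivWithinAt_nonpos (f' := f') (convex_Ioc a x₀)
      (hcont.mono Ioc_subset_Ioi_self) (fun y hy ↦ ?_) (fun y hy ↦ ?_)
      ⟨hx, hx_le⟩ ⟨hx₀, le_rfl⟩ hx_le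
    · rw [interior_Ioc] at hy ⊢
      exact (hf y hy.1).hasDerivWithinAt
    · rw [interior_Ioc] at hy
      exact hleft y hy
  · refine monotoneOn_of_hasDerivWithinAt_nonneg (f' := f') (convex_Ici x₀)
      (hcont.mono (Ici_subset_Ioi.2 hx₀)) (fun y hy ↦ ?_) (fun y hy ↦ ?_)
      self_mem_Ici hx_ge hx_ge
    · rw [interior_Ici] at hy ⊢
      exact (hf y (hx₀.trans hy)).hasDerivWithinAt
    · rw [interior_Ici] at hy
      exact hright y hy

lemma eq_zero_of_isMinOn_div_add_div_sq {g : ℝ → ℝ} {a r₀ : ℝ} (hr₀ : 0 < r₀) (hg₀ : 0 ≤ g r₀)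
    (hmin : IsMinOn (fun r ↦ g r / r + a / r ^ 2) (Ioi 0) r₀) (hg : IntegrableOn g (Ioi 0)) :
    a = 0 := by
  set μ := g r₀ / r₀ + a / r₀ ^ 2
  have hbound : ∀ r ∈ Ioi (0 : ℝ), μ * r ^ 2 - a ≤ r * g r := fun r hr ↦ by
    have hr : 0 < r := hr
    have h := isMinOn_iff.1 hmin r hr
    rw [div_add_div _ _ hr.ne' (by positivity), le_div_iff₀ (by positivity)] at h
    nlinarith
  rcases lt_trichotomy a 0 with ha | ha | ha
  · refine absurd hg (not_integrableOn_Ioi_zero_of_eventually_div_le (c := -a / 2) (by linarith) ?_)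
    have hlim : Tendsto (fun r ↦ μ * r ^ 2 - a) (𝓝[>] 0) (𝓝 (-a)) := by
      have hcont : Continuous (fun r : ℝ ↦ μ * r ^ 2 - a) := by fun_prop
      simpa using (hcont.tendsto 0).mono_left nhdsWithin_le_nhds
    filter_upwards [hlim.eventually_const_le (by linarith : -a / 2 < -a), self_mem_nhdsWithin]
      with r hr hr0
    rw [div_le_iff₀ hr0]
    linarith [hbound r hr0]
  · exact ha
  · refine absurd hg (not_integrableOn_Ioi_of_eventually_ge one_pos ?_)
    have hμ : 0 < μ := by positivity
    have hlim : Tendsto (fun r ↦ μ * r - a * r⁻¹) atTop atTop :=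
      (tendsto_id.const_mul_atTop hμ).atTop_add
        (by simpa using tendsto_inv_atTop_zero.const_mul (-a))
    filter_upwards [hlim.eventually_ge_atTop 1, eventually_gt_atTop 0] with r hr hr0
    have := hbound r hr0
    refine hr.trans ?_
    rw [← mul_le_mul_iff_of_pos_left hr0]
    field_simp
    nlinarith

section InnerProductSpace

open scoped RealInnerProductSpace

variable {E : Type*} [NormedAddCommGroup E] [InnerProductSpace ℝ E]

lemma mul_inner_add_sq_mul_norm_sq_add_norm_sq_div_four_nonneg (x y : E) (r : ℝ) :
    0 ≤ r * ⟪x, y⟫ + r ^ 2 * ‖y‖ ^ 2 + ‖x‖ ^ 2 / 4 := by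
  have h := norm_add_sq_real ((2⁻¹ : ℝ) • x) (r • y)
  rw [norm_smul, norm_smul, real_inner_smul_left, real_inner_smul_right, Real.norm_eq_abs,
    Real.norm_eq_abs, mul_pow, mul_pow, sq_abs, sq_abs] at h
  nlinarith [sq_nonneg ‖(2⁻¹ : ℝ) • x + r • y‖]

noncomputable def radialFlux (ψ ψ' : ℝ → E) (r : ℝ) : ℝ := r ^ 2 * ⟪ψ r, ψ' r⟫ - r * ‖ψ r‖ ^ 2 / 2

variable {ψ ψ' ψ'' : ℝ → E} {r : ℝ}

lemma hasDerivAt_radialFlux (hψ : HasDerivAt ψ (ψ' r) r) (hψ' : HasDerivAt ψ' (ψ'' r) r) :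
    HasDerivAt (radialFlux ψ ψ')
      (r * ⟪ψ r, ψ' r⟫ + r ^ 2 * (‖ψ' r‖ ^ 2 + ⟪ψ r, ψ'' r⟫) - ‖ψ r‖ ^ 2 / 2) r := by
  have h := ((hasDerivAt_pow 2 r).mul (hψ.inner ℝ hψ')).sub
    (((hasDerivAt_id r).mul hψ.norm_sq).div_const 2)
  refine h.congr_deriv ?_
  simp only [real_inner_self_eq_norm_sq, real_inner_comm (ψ' r), id]
  ring

lemma hasDerivAt_norm_sq_div_add_div_sq (a : ℝ) (hr : r ≠ 0) (hψ : HasDerivAt ψ (ψ' r) r) :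
    HasDerivAt (fun s ↦ ‖ψ s‖ ^ 2 / s + a / s ^ 2) (2 * (radialFlux ψ ψ' r - a) / r ^ 3) r := by
  have h := (hψ.norm_sq.div (hasDerivAt_id r) hr).add
    ((hasDerivAt_const r a).div (hasDerivAt_pow 2 r) (pow_ne_zero 2 hr))
  refine h.congr_deriv ?_
  simp only [radialFlux, id]
  field_simp
  ring

lemma radialFlux_eq_zero (hψ : ∀ r ∈ Ioi 0, HasDerivAt ψ (ψ' r) r)
    (hmono : MonotoneOn (radialFlux ψ ψ') (Ioi 0))
    (hL2 : IntegrableOn (fun r ↦ ‖ψ r‖ ^ 2) (Ioi 0)) :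
    ∀ r ∈ Ioi 0, radialFlux ψ ψ' r = 0 := by
  intro r₀ hr₀
  refine eq_zero_of_isMinOn_div_add_div_sq hr₀ (by positivity) ?_ hL2
  refine isMinOn_Ioi_of_hasDerivAt hr₀
    (fun r hr ↦ hasDerivAt_norm_sq_div_add_div_sq _ (ne_of_gt hr) (hψ r hr))
    (fun r hr ↦ ?_) (fun r hr ↦ ?_)
  · have hr0 : 0 < r := hr.1
    have := hmono hr.1 hr₀ hr.2.le
    exact div_nonpos_of_nonpos_of_nonneg (by linarith) (by positivity)
  · have hr0 : 0 < r := hr₀.trans hr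
    have := hmono hr₀ hr0 (le_of_lt hr)
    exact div_nonneg (by linarith) (by positivity)

theorem eq_zero_of_mul_norm_sq_le_inner_deriv_deriv {V : ℝ → ℝ}
    (hψ : ∀ r ∈ Ioi 0, HasDerivAt ψ (ψ' r) r) (hψ' : ∀ r ∈ Ioi 0, HasDerivAt ψ' (ψ'' r) r)
    (hV : ∀ r ∈ Ioi 0, 3 / 4 < r ^ 2 * V r)
    (hψψ'' : ∀ r ∈ Ioi 0, V r * ‖ψ r‖ ^ 2 ≤ ⟪ψ r, ψ'' r⟫)
    (hL2 : MemLp ψ 2 (volume.restrict (Ioi 0))) :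
    ∀ r ∈ Ioi 0, ψ r = 0 := by
  set K' := fun r ↦ r * ⟪ψ r, ψ' r⟫ + r ^ 2 * (‖ψ' r‖ ^ 2 + ⟪ψ r, ψ'' r⟫) - ‖ψ r‖ ^ 2 / 2
  have hK' : ∀ r ∈ Ioi 0, HasDerivAt (radialFlux ψ ψ') (K' r) r := fun r hr ↦
    hasDerivAt_radialFlux (hψ r hr) (hψ' r hr)
  -- Cauchy–Schwarz absorbs the cross term `r⟪ψ, ψ'⟫`.
  have hK'_ge : ∀ r ∈ Ioi 0, (r ^ 2 * V r - 3 / 4) * ‖ψ r‖ ^ 2 ≤ K' r := fun r hr ↦ by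
    simp only [K']
    nlinarith [mul_inner_add_sq_mul_norm_sq_add_norm_sq_div_four_nonneg (ψ r) (ψ' r) r,
      mul_le_mul_of_nonneg_left (hψψ'' r hr) (sq_nonneg r)]
  have hK'_nonneg : ∀ r ∈ Ioi 0, 0 ≤ K' r := fun r hr ↦
    (mul_nonneg (by linarith [hV r hr]) (sq_nonneg _)).trans (hK'_ge r hr)
  have hmono : MonotoneOn (radialFlux ψ ψ') (Ioi 0) :=
    monotoneOn_of_hasDerivWithinAt_nonneg (convex_Ioi 0)
      (fun r hr ↦ (hK' r hr).continuousAt.continuousWithinAt)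
      (fun r hr ↦ (hK' r (interior_subset hr)).hasDerivWithinAt)
      (fun r hr ↦ hK'_nonneg r (interior_subset hr))
  have hK_zero := radialFlux_eq_zero hψ hmono (hL2.integrable_norm_pow two_ne_zero)
  intro r hr
  have hK'_zero : K' r = 0 := (hK' r hr).unique <| (hasDerivAt_const r 0).congr_of_eventuallyEq <|
    eventually_of_mem (isOpen_Ioi.mem_nhds hr) hK_zero
  have := hK'_ge r hr
  have := hV r hr
  rw [← norm_eq_zero, ← sq_eq_zero_iff]
  nlinarith [sq_nonneg ‖ψ r‖]

end InnerProductSpace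

open scoped RealInnerProductSpace in
lemma Complex.inner_mul_right_self (z w : ℂ) : ⟪z, w * z⟫ = w.re * ‖z‖ ^ 2 := by
  rw [Complex.inner, mul_assoc, Complex.mul_conj, Complex.re_mul_ofReal, Complex.normSq_eq_norm_sq]

noncomputable def landauPotential (b : ℝ) (l : ℤ) (r : ℝ) : ℝ :=
  ((l : ℝ) ^ 2 - 1 / 4) / r ^ 2 + b ^ 2 * r ^ 2 / 4

lemma three_div_four_lt_sq_mul_landauPotential {b : ℝ} (hb : b ≠ 0) {l : ℤ} (hl : l ≠ 0) {r : ℝ}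
    (hr : r ≠ 0) : 3 / 4 < r ^ 2 * landauPotential b l r := by
  have hl2 : (1 : ℝ) ≤ (l : ℝ) ^ 2 := by
    have : (1 : ℤ) ≤ l ^ 2 := by rw [one_le_sq_iff_one_le_abs]; exact Int.one_le_abs hl
    exact_mod_cast this
  have hconf : 0 < r ^ 2 * (b ^ 2 * r ^ 2 / 4) := by positivity
  rw [landauPotential, mul_add, mul_div_cancel₀ _ (by positivity)]
  linarith

lemma deriv_deriv_eq_of_landau_deficiency {b m : ℝ} (hm : m ≠ 0) {l : ℤ} {r : ℝ} (hr : r ≠ 0)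
    {z z'' : ℂ}
    (h : -(1 / (2 * (m : ℂ))) * (z'' + ((1 : ℂ) / 4 - (l : ℂ) ^ 2) * z / (r : ℂ) ^ 2
      - (b : ℂ) ^ 2 * (r : ℂ) ^ 2 / 4 * z) = -Complex.I * z) :
    z'' = (landauPotential b l r + 2 * m * Complex.I) * z := by
  have hm' : (m : ℂ) ≠ 0 := by exact_mod_cast hm
  have hr' : (r : ℂ) ≠ 0 := by exact_mod_cast hr
  field_simp at h
  rw [landauPotential]
  push_cast
  field_simp
  linear_combination -h

/-- For `b > 0`, `m > 0` and a nonzero integer `l`, any twice continuously differentiable,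
square-integrable solution `ψ` on `(0,∞)` of the deficiency equation
`−(1/(2m))[ψ'' + (1/4 − l²)ψ/r² − (b²r²/4)ψ] = −i ψ` vanishes identically on `(0,∞)`. -/
theorem deficiency_minus_trivial_of_l_ne_zero
    (b m : ℝ) (hb : 0 < b) (hm : 0 < m) (l : ℤ) (hl : l ≠ 0)
    (ψ : ℝ → ℂ)
    (hsmooth : ContDiffOn ℝ 2 ψ (Set.Ioi 0))
    (hL2 : MemLp ψ 2 (volume.restrict (Set.Ioi 0)))
    (hode : ∀ r ∈ Set.Ioi (0 : ℝ),
      -(1 / (2 * (m : ℂ))) * (deriv (deriv ψ) r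
          + ((1 : ℂ) / 4 - (l : ℂ) ^ 2) * ψ r / (r : ℂ) ^ 2
          - (b : ℂ) ^ 2 * (r : ℂ) ^ 2 / 4 * ψ r)
        = -Complex.I * ψ r) :
    ∀ r ∈ Set.Ioi (0 : ℝ), ψ r = 0 := by
  have hψ : ∀ r ∈ Ioi (0 : ℝ), HasDerivAt ψ (deriv ψ r) r := fun r hr ↦
    ((hsmooth.differentiableOn two_ne_zero).differentiableAt (isOpen_Ioi.mem_nhds hr)).hasDerivAt
  have hψ' : ∀ r ∈ Ioi (0 : ℝ), HasDerivAt (deriv ψ) (deriv (deriv ψ) r) r := fun r hr ↦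
    (((hsmooth.deriv_of_isOpen isOpen_Ioi (by norm_num)).differentiableOn one_ne_zero)
      |>.differentiableAt (isOpen_Ioi.mem_nhds hr)).hasDerivAt
  refine eq_zero_of_mul_norm_sq_le_inner_deriv_deriv (V := landauPotential b l) hψ hψ'
    (fun r hr ↦ three_div_four_lt_sq_mul_landauPotential hb.ne' hl (ne_of_gt hr))
    (fun r hr ↦ le_of_eq ?_) hL2
  rw [deriv_deriv_eq_of_landau_deficiency hm.ne' (ne_of_gt hr) (hode r hr),
    Complex.inner_mul_right_self]
  simp
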